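/- arXiv:2508.04133 — 2 statements merged into one kernel-verified Lean document; each statement's English description precedes it below -/
import Mathlib

section
/- Let A₁, …, A_d be subsets of [m], each of size ℓ, such that |A₁ ∪ ⋯ ∪ A_d| > dℓ − d/2. Then there exists an index j ∈ [d] such that A_j is disjoint from A_i for every i ≠ j. -/
/-!
Let `c x` be the number of sets containing `x`. Double counting gives
`∑ |A i| = |⋃ A i| + ∑_{x ∈ ⋃ A i} (c x - 1)`. If `A j` meets some other `A i`, it contains a
point with `c x ≥ 2`, and such a point lies in at most `c x ≤ 2 (c x - 1)` sets. Hence at most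
`2 (∑ |A i| - |⋃ A i|) = 2 (dℓ - |⋃ A i|) < d` sets meet another one.
-/

open Finset

namespace Finset

variable {ι α : Type*} [Fintype ι] [DecidableEq α]

def pointDegree (A : ι → Finset α) (x : α) : ℕ := #{i | x ∈ A i}

lemma sum_card_eq_sum_pointDegree (A : ι → Finset α) :
    ∑ i, #(A i) = ∑ x ∈ univ.biUnion A, pointDegree A x := by
  have hA : ∀ i, (univ.biUnion A).bipartiteAbove (fun i x => x ∈ A i) i = A i := fun i =>
    filter_mem_eq_inter.trans (inter_eq_right.2 (subset_biUnion_of_mem A (mem_univ i)))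
  have h := sum_card_bipartiteAbove_eq_sum_card_bipartiteBelow (s := univ)
    (t := univ.biUnion A) (r := fun i x => x ∈ A i)
  rw [sum_congr rfl fun i _ => congrArg card (hA i)] at h
  exact h

lemma one_le_pointDegree {A : ι → Finset α} {x : α} (hx : x ∈ univ.biUnion A) :
    1 ≤ pointDegree A x := by
  obtain ⟨i, -, hi⟩ := mem_biUnion.1 hx
  exact card_pos.2 ⟨i, mem_filter.2 ⟨mem_univ i, hi⟩⟩

lemma card_biUnion_add_sum_pointDegree_sub_one (A : ι → Finset α) :
    #(univ.biUnion A) + ∑ x ∈ univ.biUnion A, (pointDegree A x - 1) = ∑ i, #(A i) := by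
  rw [sum_card_eq_sum_pointDegree, card_eq_sum_ones, ← sum_add_distrib]
  refine sum_congr rfl fun x hx => ?_
  have := one_le_pointDegree hx
  omega

lemma card_le_two_mul_sum_pointDegree_sub_one {A : ι → Finset α} {J : Finset ι}
    (hJ : ∀ j ∈ J, ∃ i ≠ j, ¬Disjoint (A j) (A i)) :
    #J ≤ 2 * ∑ x ∈ univ.biUnion A, (pointDegree A x - 1) := by
  classical
  set V := {x ∈ univ.biUnion A | 2 ≤ pointDegree A x}
  have hcover : J ⊆ V.biUnion fun x => {i | x ∈ A i} := by
    intro j hj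
    obtain ⟨i, hij, hji⟩ := hJ j hj
    obtain ⟨x, hxj, hxi⟩ := not_disjoint_iff.1 hji
    have hpair : ({j, i} : Finset ι) ⊆ ({k | x ∈ A k} : Finset ι) := by
      simp [insert_subset_iff, hxj, hxi]
    have hdeg : 2 ≤ pointDegree A x := (card_pair hij.symm).symm.le.trans (card_le_card hpair)
    simp only [mem_biUnion, mem_filter, mem_univ, true_and, V]
    exact ⟨x, ⟨⟨j, hxj⟩, hdeg⟩, hxj⟩
  calc #J ≤ ∑ x ∈ V, pointDegree A x := (card_le_card hcover).trans card_biUnion_le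
    _ ≤ ∑ x ∈ V, 2 * (pointDegree A x - 1) := sum_le_sum fun x hx => by
        have := (mem_filter.1 hx).2
        omega
    _ ≤ ∑ x ∈ univ.biUnion A, 2 * (pointDegree A x - 1) :=
        sum_le_sum_of_subset (filter_subset _ _)
    _ = _ := (mul_sum ..).symm

end Finset

theorem stmt1_general (d ℓ m : ℕ)
    (A : Fin d → Finset (Fin m)) (hcard : ∀ i, (A i).card = ℓ)
    (hunion : ((d : ℝ) * ℓ - d / 2) < ((Finset.univ.biUnion A).card : ℝ)) :
    ∃ j : Fin d, ∀ i : Fin d, i ≠ j → Disjoint (A j) (A i) := by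
  by_contra! h
  have hbound := card_le_two_mul_sum_pointDegree_sub_one (J := univ) fun j _ => h j
  have hsum := card_biUnion_add_sum_pointDegree_sub_one A
  simp only [hcard, sum_const, card_univ, Fintype.card_fin, smul_eq_mul] at hbound hsum
  have : (d : ℝ) + 2 * #(univ.biUnion A) ≤ 2 * (d * ℓ) := by exact_mod_cast (by omega)
  linarith

theorem stmt1 (d ℓ m : ℕ) (hd : 0 < d) (hℓ : 0 < ℓ) (hm : 0 < m)
    (A : Fin d → Finset (Fin m)) (hcard : ∀ i, (A i).card = ℓ)
    (hunion : ((d : ℝ) * ℓ - d / 2) < ((Finset.univ.biUnion A).card : ℝ)) :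
    ∃ j : Fin d, ∀ i : Fin d, i ≠ j → Disjoint (A j) (A i) :=
  stmt1_general d ℓ m A hcard hunion
end

section
/- Let A₁, …, A_d ∈ ([m] choose ℓ) with |A₁ ∪ ⋯ ∪ A_d| = dℓ − a and dℓ < m. Then |binom(A₁,2) ∪ ⋯ ∪ binom(A_d,2)| ≥ d·C(ℓ,2) − min{(a/ℓ)·C(ℓ,2), C(a,2)}, where binom(A,2) denotes the set of unordered pairs of distinct elements of A and C(x,2) = x(x−1)/2. -/
/-!
Order the sets and let `bᵢ = |Aᵢ ∩ (A₁ ∪ ⋯ ∪ Aᵢ₋₁)|`. Each `Aᵢ` adds `ℓ - bᵢ` new points and at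
least `C(ℓ,2) - C(bᵢ,2)` new pairs, since every old pair inside `Aᵢ` lies in the overlap. Counting
points gives `∑ bᵢ ≤ a`, and counting pairs leaves a deficit `∑ C(bᵢ,2)`, which is at most `C(a,2)`
by superadditivity of `C(·,2)` and at most `∑ bᵢ (ℓ-1)/2 ≤ (a/ℓ) C(ℓ,2)` because `bᵢ ≤ ℓ`.
-/

open Finset

namespace Nat

theorem two_mul_choose_two (n : ℕ) : 2 * n.choose 2 = n * (n - 1) := by
  rw [choose_two_right, Nat.mul_div_cancel' (even_mul_pred_self n).two_dvd]

theorem choose_add_choose_le_choose_add {k : ℕ} (hk : k ≠ 0) (x y : ℕ) :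
    x.choose k + y.choose k ≤ (x + y).choose k := by
  have hpair : {(k, 0), (0, k)} ⊆ antidiagonal k := by
    intro p hp
    simp only [mem_insert, mem_singleton] at hp
    rcases hp with rfl | rfl <;> simp
  have hne : (k, 0) ≠ (0, k) := by simp [hk]
  calc x.choose k + y.choose k
      = ∑ ij ∈ {(k, 0), (0, k)}, x.choose ij.1 * y.choose ij.2 := by simp [sum_pair hne]
    _ ≤ ∑ ij ∈ antidiagonal k, x.choose ij.1 * y.choose ij.2 :=
        sum_le_sum_of_subset hpair
    _ = (x + y).choose k := (add_choose_eq x y k).symm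

theorem sum_choose_le_choose_sum {ι : Type*} {k : ℕ} (hk : k ≠ 0) (s : Finset ι)
    (f : ι → ℕ) : ∑ i ∈ s, (f i).choose k ≤ (∑ i ∈ s, f i).choose k := by
  classical
  induction s using Finset.induction with
  | empty => simp
  | insert i s hi ih =>
    rw [sum_insert hi, sum_insert hi]
    exact (Nat.add_le_add_left ih _).trans (choose_add_choose_le_choose_add hk _ _)

theorem two_mul_sum_choose_two_le {ι : Type*} (s : Finset ι) (f : ι → ℕ) {ℓ : ℕ}
    (hf : ∀ i ∈ s, f i ≤ ℓ) :
    2 * ∑ i ∈ s, (f i).choose 2 ≤ (∑ i ∈ s, f i) * (ℓ - 1) := by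
  rw [mul_sum, sum_mul]
  refine sum_le_sum fun i hi => ?_
  rw [two_mul_choose_two]
  exact Nat.mul_le_mul_left _ (Nat.sub_le_sub_right (hf i hi) 1)

end Nat

-- The truncated `ℓ - 1` makes this hold at `ℓ = 0` too, where both sides vanish.
theorem div_mul_choose_two_eq (a ℓ : ℕ) :
    (a / ℓ : ℝ) * ℓ.choose 2 = a * ((ℓ - 1 : ℕ) : ℝ) / 2 := by
  rcases ℓ with _ | ℓ
  · simp
  · rw [Nat.cast_choose_two]
    push_cast
    field_simp
    ring

theorem powersetCard_inter_biUnion_powersetCard_subset {ι α : Type*} [DecidableEq α] (k : ℕ)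
    (B : Finset α) (s : Finset ι) (A : ι → Finset α) :
    B.powersetCard k ∩ s.biUnion (fun j => (A j).powersetCard k)
      ⊆ (B ∩ s.biUnion A).powersetCard k := by
  intro p hp
  simp only [mem_inter, mem_powersetCard, mem_biUnion] at hp ⊢
  obtain ⟨⟨hpB, hpk⟩, j, hj, hpj, -⟩ := hp
  exact ⟨subset_inter hpB (hpj.trans (subset_biUnion_of_mem A hj)), hpk⟩

section EarlierOverlap

variable {ι α : Type*} [LinearOrder ι] [DecidableEq α]

def earlierOverlap (s : Finset ι) (A : ι → Finset α) (i : ι) : Finset α :=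
  A i ∩ {j ∈ s | j < i}.biUnion A

theorem earlierOverlap_insert_of_le {s : Finset ι} {A : ι → Finset α} {i j : ι}
    (hji : j ≤ i) : earlierOverlap (insert i s) A j = earlierOverlap s A j := by
  rw [earlierOverlap, earlierOverlap, filter_insert, if_neg hji.not_gt]

theorem sum_earlierOverlap_insert {M : Type*} [AddCommMonoid M] {s : Finset ι}
    (A : ι → Finset α) (f : Finset α → M) {i : ι} (hs : ∀ j ∈ s, j < i) :
    ∑ j ∈ insert i s, f (earlierOverlap (insert i s) A j)
      = f (A i ∩ s.biUnion A) + ∑ j ∈ s, f (earlierOverlap s A j) := by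
  have hi : i ∉ s := fun h => lt_irrefl i (hs i h)
  have hfilter : {j ∈ insert i s | j < i} = s := by
    rw [filter_insert, if_neg (lt_irrefl i), filter_true_of_mem hs]
  rw [sum_insert hi, earlierOverlap, hfilter]
  congr 1
  exact sum_congr rfl fun j hj => by rw [earlierOverlap_insert_of_le (hs j hj).le]

theorem card_biUnion_add_sum_card_earlierOverlap (s : Finset ι) (A : ι → Finset α) :
    #(s.biUnion A) + ∑ i ∈ s, #(earlierOverlap s A i) = ∑ i ∈ s, #(A i) := by
  induction s using Finset.induction_on_max with
  | empty => simp
  | insert i s hs ih =>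
    have hi : i ∉ s := fun h => lt_irrefl i (hs i h)
    rw [sum_earlierOverlap_insert A card hs, biUnion_insert, sum_insert hi]
    have := card_union_add_card_inter (A i) (s.biUnion A)
    omega

theorem sum_choose_card_le_card_biUnion_powersetCard (k : ℕ) (s : Finset ι)
    (A : ι → Finset α) :
    ∑ i ∈ s, (#(A i)).choose k
      ≤ #(s.biUnion fun i => (A i).powersetCard k)
        + ∑ i ∈ s, (#(earlierOverlap s A i)).choose k := by
  induction s using Finset.induction_on_max with
  | empty => simp
  | insert i s hs ih =>
    have hi : i ∉ s := fun h => lt_irrefl i (hs i h)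
    rw [sum_earlierOverlap_insert A (fun B => (#B).choose k) hs, biUnion_insert,
      sum_insert hi]
    have hunion := card_union_add_card_inter ((A i).powersetCard k)
      (s.biUnion fun j => (A j).powersetCard k)
    have hinter := card_le_card (powersetCard_inter_biUnion_powersetCard_subset k (A i) s A)
    rw [card_powersetCard] at hunion hinter
    omega

end EarlierOverlap

theorem stmt2_general (d ℓ m a : ℕ)
    (A : Fin d → Finset (Fin m)) (hcard : ∀ i, (A i).card = ℓ)
    (hunion : (Finset.univ.biUnion A).card = d * ℓ - a) :
    (d : ℝ) * (ℓ.choose 2) -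
      min ((a / ℓ : ℝ) * (ℓ.choose 2)) ((a.choose 2 : ℝ)) ≤
    ((Finset.univ.biUnion fun i => (A i).powersetCard 2).card : ℝ) := by
  set b := fun i => #(earlierOverlap univ A i)
  set T := ∑ i, (b i).choose 2
  have hb : ∀ i ∈ univ, b i ≤ ℓ := fun i _ => hcard i ▸ card_le_card inter_subset_left
  have hsum : ∑ i, b i ≤ a := by
    have := card_biUnion_add_sum_card_earlierOverlap univ A
    simp only [hcard, sum_const, card_univ, Fintype.card_fin, smul_eq_mul] at this
    change #(univ.biUnion A) + ∑ i, b i = d * ℓ at this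
    omega
  have hpairs : d * ℓ.choose 2 ≤ #(univ.biUnion fun i => (A i).powersetCard 2) + T := by
    simpa [hcard] using sum_choose_card_le_card_biUnion_powersetCard 2 univ A
  have hT_choose : T ≤ a.choose 2 :=
    (Nat.sum_choose_le_choose_sum two_ne_zero univ b).trans (Nat.choose_le_choose 2 hsum)
  have hT_linear : 2 * T ≤ a * (ℓ - 1) :=
    (Nat.two_mul_sum_choose_two_le univ b hb).trans (Nat.mul_le_mul_right _ hsum)
  have hT : (T : ℝ) ≤ min ((a / ℓ : ℝ) * (ℓ.choose 2)) ((a.choose 2 : ℝ)) := by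
    refine le_min ?_ (by exact_mod_cast hT_choose)
    have : ((2 * T : ℕ) : ℝ) ≤ ((a * (ℓ - 1) : ℕ) : ℝ) := by exact_mod_cast hT_linear
    push_cast at this
    rw [div_mul_choose_two_eq]
    linarith
  have : (d * ℓ.choose 2 : ℝ) ≤ #(univ.biUnion fun i => (A i).powersetCard 2) + T := by
    exact_mod_cast hpairs
  linarith

theorem stmt2 (d ℓ m a : ℕ) (hℓpos : 0 < ℓ)
    (A : Fin d → Finset (Fin m)) (hcard : ∀ i, (A i).card = ℓ)
    (hdm : d * ℓ < m) (ha : a ≤ d * ℓ)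
    (hunion : (Finset.univ.biUnion A).card = d * ℓ - a) :
    (d : ℝ) * (ℓ.choose 2) -
      min ((a / ℓ : ℝ) * (ℓ.choose 2)) ((a.choose 2 : ℝ)) ≤
    ((Finset.univ.biUnion fun i => (A i).powersetCard 2).card : ℝ) :=
  stmt2_general d ℓ m a A hcard hunion
end
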